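/- Let n ≥ 1 and let Fₙ : ℝⁿ → ℝ^{n+1} be the chart map of the cubic model of Sⁿ, defined by Fₙ(x) = (1, x)/√(1 + ‖x‖₂²). For every x ∈ ℝⁿ with ‖x‖_∞ ≤ 1 and every v ∈ ℝⁿ, the derivative of Fₙ satisfies (1/(n+1))·‖v‖₂ ≤ ‖DFₙ(x)(v)‖₂ ≤ ‖v‖₂. -/

import Mathlib

/-- The sup norm of a point of Euclidean space (the `ℓ^∞` norm). -/
noncomputable def supNorm {m : ℕ} (q : EuclideanSpace ℝ (Fin m)) : ℝ :=
  ‖(EuclideanSpace.equiv (Fin m) ℝ) q‖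

/-- The chart map `Fₙ : ℝⁿ → ℝ^{n+1}` of the cubic model of `Sⁿ`:
`Fₙ(x) = (1, x) / √(1 + ‖x‖₂²)`. -/
noncomputable def chartMapN (n : ℕ) (x : EuclideanSpace ℝ (Fin n)) :
    EuclideanSpace ℝ (Fin (n + 1)) :=
  (Real.sqrt (1 + ‖x‖ ^ 2))⁻¹ •
    (EuclideanSpace.equiv (Fin (n + 1)) ℝ).symm
      (Fin.cons 1 ((EuclideanSpace.equiv (Fin n) ℝ) x))

noncomputable def embL (n : ℕ) : EuclideanSpace ℝ (Fin n) →L[ℝ] EuclideanSpace ℝ (Fin (n+1)) :=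
  LinearMap.toContinuousLinearMap
  { toFun := fun v => (EuclideanSpace.equiv (Fin (n+1)) ℝ).symm
      (Fin.cons 0 ((EuclideanSpace.equiv (Fin n) ℝ) v))
    map_add' := by
      intro u v; ext i
      induction i using Fin.cases <;> simp
    map_smul' := by
      intro c v; ext i
      induction i using Fin.cases <;> simp }

@[simp] lemma embL_zero (n : ℕ) (v : EuclideanSpace ℝ (Fin n)) : embL n v 0 = 0 := rfl

@[simp] lemma embL_succ (n : ℕ) (v : EuclideanSpace ℝ (Fin n)) (j : Fin n) :
    embL n v j.succ = v j := rfl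

lemma chart_decomp (n : ℕ) :
    chartMapN n = fun y => (Real.sqrt (1 + ‖y‖ ^ 2))⁻¹ •
      (EuclideanSpace.single (0 : Fin (n+1)) (1:ℝ) + embL n y) := by
  funext y; ext i
  induction i using Fin.cases with
  | zero => simp [chartMapN, EuclideanSpace.single_apply]
  | succ j => simp [chartMapN, EuclideanSpace.single_apply, Fin.succ_ne_zero]

lemma inner_emb_emb (n : ℕ) (u v : EuclideanSpace ℝ (Fin n)) :
    (inner ℝ (embL n u) (embL n v) : ℝ) = inner ℝ u v := by
  simp only [PiLp.inner_apply, RCLike.inner_apply, starRingEnd_apply, star_trivial]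
  rw [Fin.sum_univ_succ]
  simp

lemma inner_single_emb (n : ℕ) (v : EuclideanSpace ℝ (Fin n)) :
    (inner ℝ (EuclideanSpace.single (0 : Fin (n+1)) (1:ℝ)) (embL n v) : ℝ) = 0 := by
  simp only [PiLp.inner_apply, RCLike.inner_apply, starRingEnd_apply, star_trivial]
  rw [Fin.sum_univ_succ]
  simp [EuclideanSpace.single_apply, Fin.succ_ne_zero]

lemma inner_single_single (n : ℕ) :
    (inner ℝ (EuclideanSpace.single (0 : Fin (n+1)) (1:ℝ))
      (EuclideanSpace.single (0 : Fin (n+1)) (1:ℝ)) : ℝ) = 1 := by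
  simp only [PiLp.inner_apply, RCLike.inner_apply, starRingEnd_apply, star_trivial]
  rw [Fin.sum_univ_succ]
  simp [EuclideanSpace.single_apply, Fin.succ_ne_zero]

/-- The key norm-squared formula for the derivative of the chart map. -/
theorem chartMapN_fderiv_sq (n : ℕ) (x v : EuclideanSpace ℝ (Fin n)) :
    ‖fderiv ℝ (chartMapN n) x v‖ ^ 2
      = ‖v‖^2 / (1 + ‖x‖^2) - (inner ℝ x v : ℝ)^2 / (1 + ‖x‖^2)^2 := by
  set s : ℝ := 1 + ‖x‖ ^ 2 with hs_def
  have hs : 0 < s := by positivity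
  have hr : 0 < Real.sqrt s := Real.sqrt_pos.2 hs
  have hr2 : Real.sqrt s ^ 2 = s := Real.sq_sqrt hs.le
  set E₀ : EuclideanSpace ℝ (Fin (n+1)) := EuclideanSpace.single (0 : Fin (n+1)) (1:ℝ)
  have h1 : HasFDerivAt (fun y : EuclideanSpace ℝ (Fin n) => 1 + ‖y‖^2)
      (2 • (innerSL ℝ x)) x := by
    have := (hasFDerivAt_id x).norm_sq.const_add (1:ℝ)
    simpa using this
  have h2 : HasDerivAt (fun u : ℝ => (Real.sqrt u)⁻¹)
      (-(1 / (2 * Real.sqrt s)) / Real.sqrt s ^ 2) s :=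
    (Real.hasDerivAt_sqrt hs.ne').inv hr.ne'
  have h3 : HasFDerivAt (fun y : EuclideanSpace ℝ (Fin n) => (Real.sqrt (1 + ‖y‖^2))⁻¹)
      ((-(1 / (2 * Real.sqrt s)) / Real.sqrt s ^ 2) • (2 • (innerSL ℝ x))) x :=
    by have := h2.comp_hasFDerivAt x h1; exact this
  have hc : HasFDerivAt (fun y => E₀ + embL n y) (embL n) x :=
    (embL n).hasFDerivAt.const_add E₀
  have hF : HasFDerivAt (chartMapN n)
      ((Real.sqrt s)⁻¹ • (embL n) +
        ((-(1 / (2 * Real.sqrt s)) / Real.sqrt s ^ 2) • (2 • (innerSL ℝ x))).smulRight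
          (E₀ + embL n x)) x := by
    rw [chart_decomp]
    exact h3.smul hc
  rw [hF.fderiv]
  set t : ℝ := inner ℝ x v with ht_def
  set a : ℝ := (-(1 / (2 * Real.sqrt s)) / Real.sqrt s ^ 2) * (2 * t) with ha_def
  have happ : ((Real.sqrt s)⁻¹ • (embL n) +
        ((-(1 / (2 * Real.sqrt s)) / Real.sqrt s ^ 2) • (2 • (innerSL ℝ x))).smulRight
          (E₀ + embL n x)) v
      = (Real.sqrt s)⁻¹ • embL n v + a • (E₀ + embL n x) := by
    simp [ha_def, ContinuousLinearMap.smulRight_apply, smul_smul, real_inner_smul_left,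
      mul_comm, mul_assoc]
    ring_nf
    rw [ht_def, PiLp.inner_apply]
    simp [RCLike.inner_apply, mul_comm]
  rw [happ]
  have hWW : (inner ℝ (embL n v) (embL n v) : ℝ) = ‖v‖^2 := by
    rw [inner_emb_emb, real_inner_self_eq_norm_sq]
  have hCW : (inner ℝ (E₀ + embL n x) (embL n v) : ℝ) = t := by
    rw [inner_add_left, inner_single_emb, inner_emb_emb]; simp [ht_def]
  have hCC : (inner ℝ (E₀ + embL n x) (E₀ + embL n x) : ℝ) = s := by
    rw [inner_add_left, inner_add_right, inner_add_right, inner_single_single,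
      inner_single_emb, inner_emb_emb]
    have : (inner ℝ (embL n x) E₀ : ℝ) = 0 := by
      rw [real_inner_comm, inner_single_emb]
    rw [this, real_inner_self_eq_norm_sq]; ring
  have hexp : ‖(Real.sqrt s)⁻¹ • embL n v + a • (E₀ + embL n x)‖ ^ 2
      = (Real.sqrt s)⁻¹^2 * ‖v‖^2 + 2 * ((Real.sqrt s)⁻¹ * a) * t + a^2 * s := by
    rw [← real_inner_self_eq_norm_sq]
    set C := E₀ + embL n x with hC
    have hWC : (inner ℝ (embL n v) C : ℝ) = t := by rw [real_inner_comm]; exact hCW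
    simp only [inner_add_left, inner_add_right, real_inner_smul_left, real_inner_smul_right,
      hWW, hCC, hCW, hWC]
    ring
  rw [hexp, ha_def]
  clear hexp happ hF h3 h2 hc h1 hWW hCW hCC
  clear ha_def a
  clear_value t s
  clear ht_def hs_def
  generalize Real.sqrt s = r at hr hr2
  subst hr2
  field_simp
  ring

/-- For `n ≥ 1`, every `x` in the cube `[-1,1]ⁿ` and every `v ∈ ℝⁿ`, the
derivative of the chart map `Fₙ` satisfies `(1/(n+1))·‖v‖₂ ≤ ‖DFₙ(x)(v)‖₂ ≤ ‖v‖₂`. -/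
theorem chartMapN_fderiv_bounds (n : ℕ) (hn : 1 ≤ n)
    (x : EuclideanSpace ℝ (Fin n)) (hx : supNorm x ≤ 1) (v : EuclideanSpace ℝ (Fin n)) :
    (1 / (n + 1) : ℝ) * ‖v‖ ≤ ‖fderiv ℝ (chartMapN n) x v‖ ∧
    ‖fderiv ℝ (chartMapN n) x v‖ ≤ ‖v‖ := by
  have key := chartMapN_fderiv_sq n x v
  set t : ℝ := inner ℝ x v with ht_def
  set D : ℝ := ‖fderiv ℝ (chartMapN n) x v‖ with hD_def
  have hD0 : 0 ≤ D := norm_nonneg _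
  have hs1 : (1:ℝ) ≤ 1 + ‖x‖^2 := by nlinarith [sq_nonneg ‖x‖]
  have hs0 : (0:ℝ) < 1 + ‖x‖^2 := by positivity
  -- ‖x‖² ≤ n
  have hxn : ‖x‖^2 ≤ (n:ℝ) := by
    have hnorm : ‖x‖^2 = ∑ i, ‖x i‖^2 := by
      rw [EuclideanSpace.norm_eq]
      exact Real.sq_sqrt (by positivity)
    have hcoord : ∀ i, ‖x i‖ ≤ 1 := fun i =>
      le_trans (norm_le_pi_norm ((EuclideanSpace.equiv (Fin n) ℝ) x) i) hx
    calc ‖x‖^2 = ∑ i, ‖x i‖^2 := hnorm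
      _ ≤ ∑ _i : Fin n, (1:ℝ) := Finset.sum_le_sum fun i _ => by
          nlinarith [hcoord i, norm_nonneg (x i)]
      _ = (n:ℝ) := by simp
  have hsn : 1 + ‖x‖^2 ≤ (n:ℝ) + 1 := by linarith
  -- Cauchy–Schwarz
  have ht2 : t^2 ≤ ‖x‖^2 * ‖v‖^2 := by
    have h := abs_real_inner_le_norm x v
    nlinarith [abs_nonneg (t), sq_abs t, norm_nonneg x, norm_nonneg v]
  have e : ‖v‖^2 / (1 + ‖x‖^2) - t^2 / (1 + ‖x‖^2)^2
      = (‖v‖^2 * (1 + ‖x‖^2) - t^2) / (1 + ‖x‖^2)^2 := by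
    field_simp
  rw [e] at key
  constructor
  · -- lower bound
    have hn1 : (0:ℝ) < (n:ℝ) + 1 := by positivity
    have hA0 : 0 ≤ (1 / ((n:ℝ) + 1)) * ‖v‖ := by positivity
    have hAsq : ((1 / ((n:ℝ) + 1)) * ‖v‖)^2 ≤ D^2 := by
      rw [key, le_div_iff₀ (by positivity)]
      have h1 : ‖v‖^2 ≤ ‖v‖^2 * (1 + ‖x‖^2) - t^2 := by nlinarith [ht2]
      have h2 : ((1 / ((n:ℝ) + 1)) * ‖v‖)^2 * (1 + ‖x‖^2)^2 ≤ ‖v‖^2 := by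
        have hss : (1 + ‖x‖^2)^2 ≤ ((n:ℝ) + 1)^2 := by nlinarith [hsn, hs1]
        have : ((1 / ((n:ℝ) + 1)) * ‖v‖)^2 * (1 + ‖x‖^2)^2
            ≤ ((1 / ((n:ℝ) + 1)) * ‖v‖)^2 * ((n:ℝ) + 1)^2 := by
          apply mul_le_mul_of_nonneg_left hss (by positivity)
        calc ((1 / ((n:ℝ) + 1)) * ‖v‖)^2 * (1 + ‖x‖^2)^2
            ≤ ((1 / ((n:ℝ) + 1)) * ‖v‖)^2 * ((n:ℝ) + 1)^2 := this
          _ = ‖v‖^2 := by field_simp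
      linarith
    have := Real.sqrt_le_sqrt hAsq
    rwa [Real.sqrt_sq hA0, Real.sqrt_sq hD0] at this
  · -- upper bound
    have hup : D^2 ≤ ‖v‖^2 := by
      rw [key, div_le_iff₀ (by positivity)]
      nlinarith [sq_nonneg t, sq_nonneg ‖v‖, hs1, sq_nonneg (‖v‖ * ‖x‖), sq_nonneg ‖x‖]
    have := Real.sqrt_le_sqrt hup
    rwa [Real.sqrt_sq hD0, Real.sqrt_sq (norm_nonneg v)] at this
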